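/- arXiv:1509.01790 — 2 statements merged into one kernel-verified Lean document; each statement's English description precedes it below -/
import Mathlib

section
/- Let Γ be a cone field on ℂᵏ (k ≥ 1) and let K ⊆ ℂᵏ be a nonempty compact set. Assume that every point of K is a Jensen boundary point for P_Γ: for each x ∈ K, the only Jensen measure for x with respect to P_Γ supported on K is the Dirac mass δ_x. Let u : K → ℝ be bounded and lower semicontinuous, and for x ∈ K̂_Γ set û_Γ(x) := sup{v(x) : v ∈ P_Γ, v(w) ≤ u(w) for all w ∈ K}. Then û_Γ(x) = u(x) for every x ∈ K, and for every x ∈ K̂_Γ the set of Jensen measures for x with respect to P_Γ supported on K is nonempty and û_Γ(x) = inf{∫ u dμ : μ a Jensen measure for x with respect to P_Γ supported on K}. -/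
open MeasureTheory

noncomputable section

abbrev Ck (k : ℕ) := EuclideanSpace ℂ (Fin k)

instance {k : ℕ} : MeasurableSpace (Ck k) := MeasurableSpace.comap WithLp.ofLp MeasurableSpace.pi
instance {k : ℕ} : BorelSpace (Ck k) := PiLp.borelSpace 2

/-- Levi form of a function `u : ℂᵏ → ℝ` at `z` in direction `ξ`. -/
def Levi {k : ℕ} (u : Ck k → ℝ) (z ξ : Ck k) : ℝ :=
  (1 / 4) * (iteratedFDeriv ℝ 2 u z ![ξ, ξ] +
    iteratedFDeriv ℝ 2 u z ![(Complex.I : ℂ) • ξ, (Complex.I : ℂ) • ξ])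

/-- A cone field on `ℂᵏ`. -/
structure ConeField (k : ℕ) where
  Γ : Ck k → Set (Ck k)
  smul_mem : ∀ z : Ck k, ∀ ξ ∈ Γ z, ∀ t : ℝ, 0 ≤ t → t • ξ ∈ Γ z
  exists_ne_zero : ∀ z : Ck k, ∃ ξ ∈ Γ z, ξ ≠ 0
  isClosed : IsClosed {p : Ck k × Ck k | p.2 ∈ Γ p.1}

/-- The cone `P_Γ`. -/
def PGamma {k : ℕ} (G : ConeField k) : Set (Ck k → ℝ) :=
  {u | ContDiff ℝ 2 u ∧ ∀ z : Ck k, ∀ ξ ∈ G.Γ z, 0 ≤ Levi u z ξ}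

/-- The `Γ`-hull of a compact set `K`. -/
def gammaHull {k : ℕ} (G : ConeField k) (K : Set (Ck k)) : Set (Ck k) :=
  {z | ∀ u ∈ PGamma G, u z ≤ sSup (u '' K)}

/-- A Jensen measure for `x` with respect to a family `P` of functions,
supported on `K`. -/
def IsJensenMeasure {k : ℕ} (P : Set (Ck k → ℝ)) (K : Set (Ck k)) (x : Ck k)
    (μ : Measure (Ck k)) : Prop :=
  IsProbabilityMeasure μ ∧ μ Kᶜ = 0 ∧ ∀ v ∈ P, v x ≤ ∫ z, v z ∂μ

open Filter Topology Set

/-!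
For `x` in the hull, `g ↦ û_g(x)` is a superlinear functional on the bounded functions on `K`.
Hahn–Banach gives a linear functional `φ` above it with `φ(u) = û_u(x)`. Its restriction to
`C(K)` is positive, sends `1` to `1` and dominates every `v ∈ P_Γ` at `x`, so by
Riesz–Markov–Kakutani it is integration against a Jensen measure `μ`. Because `φ` was fixed at
`u` itself, `∫ f dμ = φ(f) ≤ φ(u) = û_u(x)` for every continuous `f ≤ u`; approximating the
lower semicontinuous `u` from below by increasing Lipschitz functions and using monotone
convergence gives `∫ u dμ ≤ û_u(x)`, while `û_u(x) ≤ ∫ u dν` for every Jensen measure `ν` is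
immediate. At a point of `K` the only Jensen measure is the Dirac mass, whence `û_u = u` on `K`.
-/
theorem exists_linearMap_ge_of_superlinear {V : Type*} [AddCommGroup V] [Module ℝ V]
    (p : V → ℝ) (p_smul : ∀ c : ℝ, 0 < c → ∀ v, p (c • v) = c * p v)
    (p_add : ∀ v w, p v + p w ≤ p (v + w)) (v₀ : V) :
    ∃ φ : V →ₗ[ℝ] ℝ, (∀ v, p v ≤ φ v) ∧ φ v₀ = p v₀ := by
  have p_zero : p 0 = 0 := by
    have := p_smul 2 two_pos 0
    rw [smul_zero] at this
    linarith
  have p_smul_le (c : ℝ) : p (c • v₀) ≤ c * p v₀ := by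
    rcases lt_trichotomy c 0 with hc | rfl | hc
    · have := p_add (c • v₀) ((-c) • v₀)
      rw [← add_smul, add_neg_cancel, zero_smul, p_zero, p_smul _ (neg_pos.2 hc)] at this
      linarith
    · simp [p_zero]
    · exact (p_smul c hc v₀).le
  let f := LinearPMap.mkSpanSingleton' (σ := RingHom.id ℝ) v₀ (-p v₀) fun c hc => by
    rcases smul_eq_zero.1 hc with rfl | rfl
    · exact zero_smul _ _
    · simp [p_zero]
  obtain ⟨g, hgf, hgp⟩ := exists_extension_of_le_sublinear f (fun v => -p v)
    (fun c hc v => by simp [p_smul c hc]) (fun v w => by linarith [p_add v w]) <| by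
      rintro ⟨_, hv⟩
      obtain ⟨c, rfl⟩ := Submodule.mem_span_singleton.1 hv
      rw [LinearPMap.mkSpanSingleton'_apply, RingHom.id_apply, smul_eq_mul]
      linarith [p_smul_le c]
  have hv₀ : v₀ ∈ f.domain := Submodule.mem_span_singleton_self v₀
  refine ⟨-g, fun v => le_neg.2 (hgp v), ?_⟩
  rw [LinearMap.neg_apply, hgf ⟨v₀, hv₀⟩, LinearPMap.mkSpanSingleton'_apply_self, neg_neg]

open CompactlySupported in
theorem exists_isFiniteMeasure_integral_eq {X : Type*} [TopologicalSpace X] [T2Space X]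
    [CompactSpace X] [MeasurableSpace X] [BorelSpace X] (Λ : C(X, ℝ) →ₗ[ℝ] ℝ)
    (hΛ : ∀ f, 0 ≤ f → 0 ≤ Λ f) :
    ∃ μ : Measure X, IsFiniteMeasure μ ∧ ∀ f : C(X, ℝ), ∫ x, f x ∂μ = Λ f := by
  let Λc : C_c(X, ℝ) →ₚ[ℝ] ℝ := .mk₀
    { toFun f := Λ f.toContinuousMap
      map_add' f g := map_add Λ _ _
      map_smul' c f := map_smul Λ c _ }
    fun f hf => hΛ _ hf
  exact ⟨RealRMK.rieszMeasure Λc, inferInstance, fun f =>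
    RealRMK.integral_rieszMeasure Λc (CompactlySupportedContinuousMap.continuousMapEquiv f)⟩

def boundedFunctions (α : Type*) : Submodule ℝ (α → ℝ) where
  carrier := {g | ∃ C, ∀ a, |g a| ≤ C}
  add_mem' := by
    rintro g h ⟨C, hC⟩ ⟨D, hD⟩
    exact ⟨C + D, fun a => (abs_add_le _ _).trans (add_le_add (hC a) (hD a))⟩
  zero_mem' := ⟨0, by simp⟩
  smul_mem' := by
    rintro c g ⟨C, hC⟩
    exact ⟨|c| * C, fun a => by rw [Pi.smul_apply, smul_eq_mul, abs_mul]; gcongr; exact hC a⟩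

lemma ContinuousMap.coe_mem_boundedFunctions {X : Type*} [TopologicalSpace X] [CompactSpace X]
    (f : C(X, ℝ)) : ⇑f ∈ boundedFunctions X :=
  ⟨‖f‖, f.norm_coe_le_norm⟩

lemma integrable_of_mem_boundedFunctions {X : Type*} [MeasurableSpace X] {ν : Measure X}
    [IsFiniteMeasure ν] {g : X → ℝ} (hgm : AEStronglyMeasurable g ν)
    (hgb : g ∈ boundedFunctions X) : Integrable g ν :=
  let ⟨C, hC⟩ := hgb
  .of_bound hgm C (ae_of_all _ hC)

section LipschitzApprox

variable {X : Type*} [PseudoMetricSpace X] {g : X → ℝ}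

def lipschitzApprox (g : X → ℝ) (n : ℕ) (x : X) : ℝ := ⨅ z, g z + n * dist x z

lemma bddBelow_range_add_mul_dist (hg : BddBelow (range g)) (n : ℕ) (x : X) :
    BddBelow (range fun z => g z + n * dist x z) := by
  obtain ⟨b, hb⟩ := hg
  exact ⟨b, forall_mem_range.2 fun z =>
    le_add_of_le_of_nonneg (hb (mem_range_self z)) (by positivity)⟩

lemma lipschitzApprox_le (hg : BddBelow (range g)) (n : ℕ) (x : X) :
    lipschitzApprox g n x ≤ g x := by
  simpa [lipschitzApprox] using ciInf_le (bddBelow_range_add_mul_dist hg n x) x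

variable [Nonempty X]

lemma monotone_lipschitzApprox (hg : BddBelow (range g)) (x : X) :
    Monotone fun n => lipschitzApprox g n x := fun m n hmn =>
  le_ciInf fun z => (ciInf_le (bddBelow_range_add_mul_dist hg m x) z).trans (by gcongr)

lemma lipschitzWith_lipschitzApprox (hg : BddBelow (range g)) (n : ℕ) :
    LipschitzWith n (lipschitzApprox g n) :=
  LipschitzWith.of_le_add_mul _ fun x y => by
    rw [← sub_le_iff_le_add]
    refine le_ciInf fun z => ?_
    rw [sub_le_iff_le_add]
    calc lipschitzApprox g n x ≤ g z + n * dist x z :=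
          ciInf_le (bddBelow_range_add_mul_dist hg n x) z
      _ ≤ g z + n * dist y z + n * dist x y := by
          rw [add_assoc, ← mul_add, add_comm (dist y z)]
          gcongr
          exact dist_triangle x y z
      _ = _ := by push_cast; ring

lemma tendsto_lipschitzApprox (hg : LowerSemicontinuous g) (hgb : BddBelow (range g)) (x : X) :
    Tendsto (fun n => lipschitzApprox g n x) atTop (𝓝 (g x)) := by
  refine tendsto_order.2 ⟨fun a ha => ?_, fun a ha =>
    Eventually.of_forall fun n => (lipschitzApprox_le hgb n x).trans_lt ha⟩
  obtain ⟨b, hb⟩ := hgb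
  obtain ⟨a', haa', ha'⟩ := exists_between ha
  obtain ⟨δ, hδ, hball⟩ := Metric.eventually_nhds_iff.1 (hg x a' ha')
  obtain ⟨N, hN⟩ := exists_nat_gt ((a - b) / δ)
  filter_upwards [eventually_ge_atTop N] with n hn
  have hnδ : a < b + n * δ := by
    have : (a - b) / δ < n := hN.trans_le (by exact_mod_cast hn)
    rw [div_lt_iff₀ hδ] at this
    linarith
  refine (lt_min haa' hnδ).trans_le (le_ciInf fun z => ?_)
  rcases lt_or_ge (dist z x) δ with hz | hz
  · exact (min_le_left _ _).trans (le_add_of_le_of_nonneg (hball hz).le (by positivity))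
  · refine (min_le_right _ _).trans (add_le_add (hb (mem_range_self z)) ?_)
    rw [dist_comm] at hz
    gcongr

theorem integral_le_of_forall_continuousMap_le [MeasurableSpace X] [OpensMeasurableSpace X]
    {ν : Measure X} [IsFiniteMeasure ν] (hg : LowerSemicontinuous g) (hgb : g ∈ boundedFunctions X)
    {c : ℝ} (h : ∀ f : C(X, ℝ), ⇑f ≤ g → ∫ x, f x ∂ν ≤ c) :
    ∫ x, g x ∂ν ≤ c := by
  obtain ⟨C, hC⟩ := hgb
  have hbdd : BddBelow (range g) := ⟨-C, forall_mem_range.2 fun x => neg_le_of_abs_le (hC x)⟩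
  let F (n : ℕ) : C(X, ℝ) :=
    ⟨lipschitzApprox g n, (lipschitzWith_lipschitzApprox hbdd n).continuous⟩
  have hFg n : ⇑(F n) ≤ g := lipschitzApprox_le hbdd n
  have hFC n x : |F n x| ≤ C := abs_le.2
    ⟨le_ciInf fun z => le_add_of_le_of_nonneg (neg_le_of_abs_le (hC z)) (by positivity),
      (hFg n x).trans (le_of_abs_le (hC x))⟩
  have hgint : Integrable g ν :=
    integrable_of_mem_boundedFunctions hg.measurable.aestronglyMeasurable ⟨C, hC⟩
  have hFint n : Integrable (F n) ν :=
    integrable_of_mem_boundedFunctions (F n).continuous.aestronglyMeasurable ⟨C, hFC n⟩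
  exact le_of_tendsto' (integral_tendsto_of_tendsto_of_monotone hFint hgint
    (ae_of_all _ (monotone_lipschitzApprox hbdd)) (ae_of_all _ (tendsto_lipschitzApprox hg hbdd)))
    fun n => h (F n) (hFg n)

end LipschitzApprox

section Envelope

variable {E : Type*} (P : ConvexCone ℝ (E → ℝ)) (K : Set E)

/-- `x ∈ K̂_P`, phrased without `sSup` so that it needs no boundedness of `v` on `K`. -/
def MemHull (x : E) : Prop := ∀ v ∈ P, ∀ c : ℝ, (∀ w ∈ K, v w ≤ c) → v x ≤ c

/-- The envelope `û_g(x)`; the `sSup` is meaningful only for bounded `g` and `x` in the hull. -/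
def envelope (g : K → ℝ) (x : E) : ℝ :=
  sSup {t | ∃ v ∈ P, (∀ w : K, v w ≤ g w) ∧ t = v x}

variable {P K} {x : E} {g h : K → ℝ}

lemma MemHull.of_mem (hx : x ∈ K) : MemHull P K x := fun _ _ _ hc => hc x hx

lemma le_envelope (hx : MemHull P K x) (hg : g ∈ boundedFunctions K) {v : E → ℝ} (hv : v ∈ P)
    (hvg : ∀ w : K, v w ≤ g w) : v x ≤ envelope P K g x := by
  obtain ⟨C, hC⟩ := hg
  refine le_csSup ⟨C, ?_⟩ ⟨v, hv, hvg, rfl⟩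
  rintro _ ⟨v, hv, hvg, rfl⟩
  exact hx v hv C fun w hw => (hvg ⟨w, hw⟩).trans (le_of_abs_le (hC _))

lemma envelope_le (hconst : ∀ c : ℝ, (fun _ => c) ∈ P) (hg : g ∈ boundedFunctions K) {c : ℝ}
    (h : ∀ v ∈ P, (∀ w : K, v w ≤ g w) → v x ≤ c) : envelope P K g x ≤ c := by
  obtain ⟨C, hC⟩ := hg
  refine csSup_le ⟨-C, fun _ => -C, hconst _, fun w => neg_le_of_abs_le (hC w), rfl⟩ ?_
  rintro _ ⟨v, hv, hvg, rfl⟩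
  exact h v hv hvg

lemma le_envelope_of_forall_le (hconst : ∀ c : ℝ, (fun _ => c) ∈ P) (hx : MemHull P K x)
    (hg : g ∈ boundedFunctions K) {c : ℝ} (hc : ∀ w, c ≤ g w) : c ≤ envelope P K g x :=
  le_envelope hx hg (hconst c) hc

lemma envelope_add_le (hconst : ∀ c : ℝ, (fun _ => c) ∈ P) (hx : MemHull P K x)
    (hg : g ∈ boundedFunctions K) (hh : h ∈ boundedFunctions K) :
    envelope P K g x + envelope P K h x ≤ envelope P K (g + h) x := by
  rw [← le_sub_iff_add_le]
  refine envelope_le hconst hg fun v hv hvg => ?_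
  rw [le_sub_comm]
  refine envelope_le hconst hh fun v' hv' hv'h => ?_
  rw [le_sub_iff_add_le']
  exact le_envelope hx (add_mem hg hh) (P.add_mem hv hv') fun w => add_le_add (hvg w) (hv'h w)

lemma envelope_smul_le (hconst : ∀ c : ℝ, (fun _ => c) ∈ P) (hx : MemHull P K x)
    (hg : g ∈ boundedFunctions K) {c : ℝ} (hc : 0 < c) :
    envelope P K (c • g) x ≤ c * envelope P K g x := by
  refine envelope_le hconst (Submodule.smul_mem _ c hg) fun v hv hvg => ?_
  refine (inv_mul_le_iff₀ hc).1 (le_envelope hx hg (P.smul_mem (inv_pos.2 hc) hv) fun w => ?_)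
  exact (inv_mul_le_iff₀ hc).2 (hvg w)

lemma envelope_smul (hconst : ∀ c : ℝ, (fun _ => c) ∈ P) (hx : MemHull P K x)
    (hg : g ∈ boundedFunctions K) {c : ℝ} (hc : 0 < c) :
    envelope P K (c • g) x = c * envelope P K g x := by
  refine le_antisymm (envelope_smul_le hconst hx hg hc) ((le_inv_mul_iff₀ hc).1 ?_)
  simpa [inv_smul_smul₀ hc.ne'] using
    envelope_smul_le hconst hx (Submodule.smul_mem _ c hg) (inv_pos.2 hc)

theorem exists_linearMap_ge_envelope (hconst : ∀ c : ℝ, (fun _ => c) ∈ P) (hx : MemHull P K x)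
    (g₀ : boundedFunctions K) :
    ∃ φ : boundedFunctions K →ₗ[ℝ] ℝ,
      (∀ g : boundedFunctions K, envelope P K g x ≤ φ g) ∧ φ g₀ = envelope P K g₀ x :=
  exists_linearMap_ge_of_superlinear (fun g : boundedFunctions K => envelope P K g x)
    (fun _ hc g => envelope_smul hconst hx g.2 hc) (fun g h => envelope_add_le hconst hx g.2 h.2) g₀

end Envelope

section Jensen

variable {E : Type*} [MetricSpace E] [MeasurableSpace E] [BorelSpace E]
  {P : ConvexCone ℝ (E → ℝ)} {K : Set E} {x : E}

theorem exists_measure_integral_le_envelope [CompactSpace K] [Nonempty K]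
    (hconst : ∀ c : ℝ, (fun _ => c) ∈ P) (hcont : ∀ v ∈ P, Continuous v) (hx : MemHull P K x)
    {g : K → ℝ} (hg : LowerSemicontinuous g) (hgb : g ∈ boundedFunctions K) :
    ∃ ν : Measure K, IsProbabilityMeasure ν ∧ (∀ v ∈ P, v x ≤ ∫ w, v w ∂ν) ∧
      ∫ w, g w ∂ν ≤ envelope P K g x := by
  obtain ⟨φ, hφ, hφg⟩ := exists_linearMap_ge_envelope hconst hx ⟨g, hgb⟩
  let Λ : C(K, ℝ) →ₗ[ℝ] ℝ := φ ∘ₗ (ContinuousMap.coeFnLinearMap ℝ).codRestrict _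
    ContinuousMap.coe_mem_boundedFunctions
  have hΛ (f : C(K, ℝ)) : envelope P K f x ≤ Λ f := hφ ⟨f, f.coe_mem_boundedFunctions⟩
  have hΛ_nonneg (f : C(K, ℝ)) (hf : 0 ≤ f) : 0 ≤ Λ f :=
    (le_envelope_of_forall_le hconst hx f.coe_mem_boundedFunctions hf).trans (hΛ f)
  have hΛ_le (f : C(K, ℝ)) (hf : ⇑f ≤ g) : Λ f ≤ envelope P K g x := by
    have := (le_envelope_of_forall_le hconst hx (sub_mem hgb f.coe_mem_boundedFunctions)
      fun w => sub_nonneg.2 (hf w)).trans (hφ (⟨g, hgb⟩ - ⟨f, f.coe_mem_boundedFunctions⟩))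
    rw [map_sub, hφg] at this
    exact sub_nonneg.1 this
  have hΛ_one : Λ 1 = 1 := by
    have h₁ := (le_envelope_of_forall_le (c := 1) hconst hx
      (ContinuousMap.coe_mem_boundedFunctions 1) fun _ => le_rfl).trans (hΛ 1)
    have h₂ := (le_envelope_of_forall_le (c := -1) hconst hx
      (ContinuousMap.coe_mem_boundedFunctions (-1)) fun _ => le_rfl).trans (hΛ (-1))
    rw [map_neg] at h₂
    linarith
  obtain ⟨ν, _, hν⟩ := exists_isFiniteMeasure_integral_eq Λ hΛ_nonneg
  have hprob : IsProbabilityMeasure ν :=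
    ⟨ENNReal.toReal_eq_one_iff _ |>.1 (by simpa [hΛ_one, measureReal_def] using hν 1)⟩
  refine ⟨ν, hprob, fun v hv => ?_,
    integral_le_of_forall_continuousMap_le hg hgb fun f hf => (hν f).trans_le (hΛ_le f hf)⟩
  let vK : C(K, ℝ) := ⟨fun w => v w, (hcont v hv).comp continuous_subtype_val⟩
  calc v x ≤ envelope P K vK x := le_envelope hx vK.coe_mem_boundedFunctions hv fun _ => le_rfl
    _ ≤ Λ vK := hΛ vK
    _ = ∫ w, v w ∂ν := (hν vK).symm

theorem envelope_le_integral [CompactSpace K] (hconst : ∀ c : ℝ, (fun _ => c) ∈ P)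
    (hcont : ∀ v ∈ P, Continuous v) {ν : Measure K} [IsFiniteMeasure ν]
    (hν : ∀ v ∈ P, v x ≤ ∫ w, v w ∂ν) {g : K → ℝ} (hg : Measurable g)
    (hgb : g ∈ boundedFunctions K) : envelope P K g x ≤ ∫ w, g w ∂ν := by
  refine envelope_le hconst hgb fun v hv hvg => (hν v hv).trans (integral_mono ?_ ?_ hvg)
  · let vK : C(K, ℝ) := ⟨fun w => v w, (hcont v hv).comp continuous_subtype_val⟩
    exact integrable_of_mem_boundedFunctions vK.continuous.aestronglyMeasurable
      vK.coe_mem_boundedFunctions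
  · exact integrable_of_mem_boundedFunctions hg.aestronglyMeasurable hgb

end Jensen

section ConeField

variable {k : ℕ} {G : ConeField k} {K : Set (Ck k)} {x : Ck k}

lemma levi_add {u v : Ck k → ℝ} (hu : ContDiff ℝ 2 u) (hv : ContDiff ℝ 2 v) (z ξ : Ck k) :
    Levi (u + v) z ξ = Levi u z ξ + Levi v z ξ := by
  simp only [Levi, iteratedFDeriv_add_apply (hu.contDiffAt (n := (2 : ℕ)))
    (hv.contDiffAt (n := (2 : ℕ))), add_apply]
  ring

lemma levi_smul {u : Ck k → ℝ} (c : ℝ) (hu : ContDiff ℝ 2 u) (z ξ : Ck k) :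
    Levi (c • u) z ξ = c * Levi u z ξ := by
  simp only [Levi, iteratedFDeriv_const_smul_apply (hu.contDiffAt (n := (2 : ℕ))),
    smul_apply, smul_eq_mul]
  ring

lemma levi_const (c : ℝ) (z ξ : Ck k) : Levi (fun _ => c) z ξ = 0 := by
  simp [Levi, congrFun (iteratedFDeriv_const_of_ne (𝕜 := ℝ) two_ne_zero c) z]

variable (G) in
def gammaCone : ConvexCone ℝ (Ck k → ℝ) where
  carrier := PGamma G
  smul_mem' c hc u hu := ⟨hu.1.const_smul c, fun z ξ hξ => by
    rw [levi_smul c hu.1]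
    exact mul_nonneg hc.le (hu.2 z ξ hξ)⟩
  add_mem' u hu v hv := ⟨hu.1.add hv.1, fun z ξ hξ => by
    rw [levi_add hu.1 hv.1]
    exact add_nonneg (hu.2 z ξ hξ) (hv.2 z ξ hξ)⟩

variable (G) in
lemma const_mem_gammaCone (c : ℝ) : (fun _ => c) ∈ gammaCone G :=
  ⟨contDiff_const, fun z ξ _ => (levi_const c z ξ).ge⟩

lemma memHull_of_mem_gammaHull (hKne : K.Nonempty) (hx : x ∈ gammaHull G K) :
    MemHull (gammaCone G) K x :=
  fun v hv _ hc => (hx v hv).trans (csSup_le (hKne.image v) (forall_mem_image.2 hc))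

lemma isJensenMeasure_map_iff {P : Set (Ck k → ℝ)} (hK : MeasurableSet K) {ν : Measure K} :
    IsJensenMeasure P K x (ν.map (↑)) ↔ IsProbabilityMeasure ν ∧ ∀ v ∈ P, v x ≤ ∫ w, v w ∂ν := by
  have he := MeasurableEmbedding.subtype_coe hK
  simp only [IsJensenMeasure, he.integral_map, he.map_apply]
  refine ⟨fun ⟨h, _, hP⟩ =>
      ⟨⟨by simpa only [he.map_apply, preimage_univ] using h.measure_univ⟩, hP⟩,
    fun ⟨h, hP⟩ => ⟨Measure.isProbabilityMeasure_map he.measurable.aemeasurable, by simp, hP⟩⟩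

lemma IsJensenMeasure.exists_eq_map {P : Set (Ck k → ℝ)} (hK : MeasurableSet K) {μ : Measure (Ck k)}
    (hμ : IsJensenMeasure P K x μ) : ∃ ν : Measure K, μ = ν.map (↑) :=
  ⟨μ.comap (↑), by
    rw [map_comap_subtype_coe hK, Measure.restrict_eq_self_of_ae_mem (ae_iff.2 hμ.2.1)]⟩

theorem isLeast_integral_isJensenMeasure (hK : IsCompact K) (hKne : K.Nonempty)
    (hx : MemHull (gammaCone G) K x) {u : Ck k → ℝ} (hu : LowerSemicontinuousOn u K)
    (hub : K.domRestrict u ∈ boundedFunctions K) :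
    IsLeast {t | ∃ μ, IsJensenMeasure (PGamma G) K x μ ∧ t = ∫ z, u z ∂μ}
      (envelope (gammaCone G) K (K.domRestrict u) x) := by
  have : CompactSpace K := isCompact_iff_compactSpace.1 hK
  have : Nonempty K := hKne.to_subtype
  have hKm := hK.isClosed.measurableSet
  have he := MeasurableEmbedding.subtype_coe hKm
  have hu' : LowerSemicontinuous (K.domRestrict u) := lowerSemicontinuous_restrict_iff.2 hu
  have upper (ν : Measure K) (hν : IsJensenMeasure (PGamma G) K x (ν.map (↑))) :
      envelope (gammaCone G) K (K.domRestrict u) x ≤ ∫ z, u z ∂(ν.map (↑)) := by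
    obtain ⟨_, hjen⟩ := (isJensenMeasure_map_iff hKm).1 hν
    rw [he.integral_map]
    exact envelope_le_integral (const_mem_gammaCone G) (fun v hv => hv.1.continuous) hjen
      hu'.measurable hub
  refine ⟨?_, ?_⟩
  · obtain ⟨ν, hprob, hjen, hle⟩ := exists_measure_integral_le_envelope (const_mem_gammaCone G)
      (fun v hv => hv.1.continuous) hx hu' hub
    have hν := (isJensenMeasure_map_iff (P := PGamma G) hKm).2 ⟨hprob, hjen⟩
    exact ⟨ν.map (↑), hν, le_antisymm (upper ν hν) (by rwa [he.integral_map])⟩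
  · rintro _ ⟨μ, hμ, rfl⟩
    obtain ⟨ν, rfl⟩ := hμ.exists_eq_map hKm
    exact upper ν hμ

end ConeField

theorem gamma_monge_ampere_envelope_general {k : ℕ}
    (G : ConeField k) (K : Set (Ck k)) (hK : IsCompact K) (hKne : K.Nonempty)
    (hJensenBd : ∀ x ∈ K, ∀ μ : Measure (Ck k),
      IsJensenMeasure (PGamma G) K x μ → μ = Measure.dirac x)
    (u : Ck k → ℝ)
    (hbd : ∃ C : ℝ, ∀ x ∈ K, |u x| ≤ C)
    (hlsc : LowerSemicontinuousOn u K)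
    (uhat : Ck k → ℝ)
    (huhat : ∀ x : Ck k,
      uhat x = sSup {t : ℝ | ∃ v ∈ PGamma G, (∀ w ∈ K, v w ≤ u w) ∧ t = v x}) :
    (∀ x ∈ K, uhat x = u x) ∧
    ∀ x ∈ gammaHull G K,
      (∃ μ : Measure (Ck k), IsJensenMeasure (PGamma G) K x μ) ∧
      uhat x = sInf {t : ℝ | ∃ μ : Measure (Ck k),
        IsJensenMeasure (PGamma G) K x μ ∧ t = ∫ z, u z ∂μ} := by
  obtain ⟨C, hC⟩ := hbd
  have huhat' (x : Ck k) : uhat x = envelope (gammaCone G) K (K.domRestrict u) x := by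
    rw [huhat x, envelope]
    simp only [Subtype.forall, Set.domRestrict_apply]
    rfl
  have hleast (x : Ck k) (hx : MemHull (gammaCone G) K x) :=
    huhat' x ▸ isLeast_integral_isJensenMeasure hK hKne hx hlsc ⟨C, fun w => hC w w.2⟩
  refine ⟨fun x hx => ?_, fun x hx => ?_⟩
  · obtain ⟨μ, hμ, hμu⟩ := (hleast x (.of_mem hx)).1
    rw [hμu, hJensenBd x hx μ hμ, integral_dirac]
  · have h := hleast x (memHull_of_mem_gammaHull hKne hx)
    obtain ⟨μ, hμ, -⟩ := h.1
    exact ⟨⟨μ, hμ⟩, h.csInf_eq.symm⟩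

/-- (The envelope identities of Section 4.)  If every point of `K` is a
Jensen boundary point for `P_Γ`, then the `Γ`-Monge–Ampère envelope `û_Γ` of a
bounded lsc function `u` on `K` agrees with `u` on `K`, and at every point of
`K̂_Γ` it is the infimum of `∫ u dμ` over Jensen measures `μ` supported on `K`. -/
theorem gamma_monge_ampere_envelope {k : ℕ} (hk : 1 ≤ k)
    (G : ConeField k) (K : Set (Ck k)) (hK : IsCompact K) (hKne : K.Nonempty)
    (hJensenBd : ∀ x ∈ K, ∀ μ : Measure (Ck k),
      IsJensenMeasure (PGamma G) K x μ → μ = Measure.dirac x)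
    (u : Ck k → ℝ)
    (hbd : ∃ C : ℝ, ∀ x ∈ K, |u x| ≤ C)
    (hlsc : LowerSemicontinuousOn u K)
    (uhat : Ck k → ℝ)
    (huhat : ∀ x : Ck k,
      uhat x = sSup {t : ℝ | ∃ v ∈ PGamma G, (∀ w ∈ K, v w ≤ u w) ∧ t = v x}) :
    (∀ x ∈ K, uhat x = u x) ∧
    ∀ x ∈ gammaHull G K,
      (∃ μ : Measure (Ck k), IsJensenMeasure (PGamma G) K x μ) ∧
      uhat x = sInf {t : ℝ | ∃ μ : Measure (Ck k),
        IsJensenMeasure (PGamma G) K x μ ∧ t = ∫ z, u z ∂μ} :=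
  gamma_monge_ampere_envelope_general G K hK hKne hJensenBd u hbd hlsc uhat huhat
end
end

section
/- Let k ≥ 2 and let α₁, …, α_m : ℂᵏ → Homℂ(ℂᵏ, ℂ) be continuous maps into the space of ℂ-linear functionals on ℂᵏ, with 1 ≤ m ≤ k − 1, and for z ∈ ℂᵏ set Γ_z := ⋂_{j=1}^m ker α_j(z), a complex subspace of dimension at least 1. Let u : ℂᵏ → ℝ be a C² function with L(u,z,ξ) ≥ 0 for every z ∈ ℂᵏ and every ξ ∈ Γ_z. Then for every nonempty bounded open set U ⊆ ℂᵏ and every x in the closure of U, u(x) ≤ sup_{ζ ∈ ∂U} u(ζ). -/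
noncomputable section

/-!
Suppose `u(x) > sup_{∂U} u`. For small `ε > 0` the function `u + ε‖·‖²` still exceeds its
boundary values somewhere, so it attains its maximum over the compact set `closure U` at an
interior point `z`, where its Levi form is `≤ 0` in every direction. Since `m < k`, the forms
`α_j(z)` have a common nonzero kernel vector `ξ`, along which the Levi form of `u + ε‖·‖²` is
`L(u, z, ξ) + ε‖ξ‖² > 0`.
-/

open Set Filter Topology

theorem IsLocalMax.deriv_deriv_nonpos {f : ℝ → ℝ} {a : ℝ} (h : IsLocalMax f a)
    (hf : ContinuousAt f a) : deriv (deriv f) a ≤ 0 := by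
  by_contra! hpos
  have hconst : f =ᶠ[𝓝 a] fun _ => f a :=
    (h.and (isLocalMin_of_deriv_deriv_pos hpos h.deriv_eq_zero hf)).mono
      fun _ hx => le_antisymm hx.1 hx.2
  have hzero : deriv (deriv f) a = 0 := by
    rw [hconst.deriv.deriv_eq]
    simp
  exact hpos.ne' hzero

section SecondDerivative

variable {E F : Type*} [NormedAddCommGroup E] [NormedSpace ℝ E]
  [NormedAddCommGroup F] [NormedSpace ℝ F]

theorem ContDiff.deriv_deriv_comp_add_smul {f : E → F} (hf : ContDiff ℝ 2 f) (z ξ : E) :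
    deriv (deriv fun t : ℝ => f (z + t • ξ)) 0 = iteratedFDeriv ℝ 2 f z ![ξ, ξ] := by
  have hline (t : ℝ) : HasDerivAt (fun s : ℝ => z + s • ξ) ξ t := by
    simpa using ((hasDerivAt_id t).smul_const ξ).const_add z
  have hderiv : deriv (fun t : ℝ => f (z + t • ξ)) = fun t => fderiv ℝ f (z + t • ξ) ξ := by
    funext t
    exact ((hf.differentiable (by norm_num) _).hasFDerivAt.comp_hasDerivAt t (hline t)).deriv
  have hf' : HasFDerivAt (fderiv ℝ f) (fderiv ℝ (fderiv ℝ f) z) (z + (0 : ℝ) • ξ) := by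
    rw [zero_smul, add_zero]
    exact ((hf.fderiv_right (m := 1) (by norm_num)).differentiable one_ne_zero z).hasFDerivAt
  have hcomp : HasDerivAt (fun t : ℝ => fderiv ℝ f (z + t • ξ)) (fderiv ℝ (fderiv ℝ f) z ξ) 0 :=
    hf'.comp_hasDerivAt 0 (hline 0)
  rw [hderiv, iteratedFDeriv_two_apply]
  simpa only [map_zero, add_zero, Matrix.cons_val_zero, Matrix.cons_val_one] using
    (hcomp.clm_apply (hasDerivAt_const 0 ξ)).deriv

theorem IsLocalMax.iteratedFDeriv_two_nonpos {f : E → ℝ} {z : E} (h : IsLocalMax f z)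
    (hf : ContDiff ℝ 2 f) (ξ : E) : iteratedFDeriv ℝ 2 f z ![ξ, ξ] ≤ 0 := by
  have hline : Continuous fun t : ℝ => z + t • ξ := by fun_prop
  have hmax : IsLocalMax (fun t : ℝ => f (z + t • ξ)) 0 :=
    IsLocalMax.comp_continuous (g := fun t : ℝ => z + t • ξ) (by simpa using h)
      hline.continuousAt
  rw [← hf.deriv_deriv_comp_add_smul]
  exact hmax.deriv_deriv_nonpos (hf.continuous.comp hline).continuousAt

end SecondDerivative

theorem iteratedFDeriv_two_norm_sq_apply {F : Type*} [NormedAddCommGroup F]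
    [InnerProductSpace ℝ F] (z ξ : F) :
    iteratedFDeriv ℝ 2 (fun x : F => ‖x‖ ^ 2) z ![ξ, ξ] = 2 * ‖ξ‖ ^ 2 := by
  rw [iteratedFDeriv_two_apply, fderiv_norm_sq, ← FunLike.coe_smul, ContinuousLinearMap.fderiv]
  simp only [Matrix.cons_val_zero, Matrix.cons_val_one, smul_apply]
  rw [innerSL_apply_apply, real_inner_self_eq_norm_sq, nsmul_eq_mul, Nat.cast_ofNat]

theorem Levi_nonpos_of_isLocalMax {k : ℕ} {u : Ck k → ℝ} {z : Ck k} (h : IsLocalMax u z)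
    (hu : ContDiff ℝ 2 u) (ξ : Ck k) : Levi u z ξ ≤ 0 := by
  have h₁ := h.iteratedFDeriv_two_nonpos hu ξ
  have h₂ := h.iteratedFDeriv_two_nonpos hu ((Complex.I : ℂ) • ξ)
  rw [Levi]
  linarith

theorem Levi_add_mul_norm_sq {k : ℕ} {u : Ck k → ℝ} (hu : ContDiff ℝ 2 u) (ε : ℝ)
    (z ξ : Ck k) : Levi (fun w => u w + ε * ‖w‖ ^ 2) z ξ = Levi u z ξ + ε * ‖ξ‖ ^ 2 := by
  -- Its real-normed-space structure agrees reducibly with the one `Ck k` already carries.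
  let _ := InnerProductSpace.rclikeToReal ℂ (Ck k)
  have hnorm : ContDiff ℝ 2 fun w : Ck k => ‖w‖ ^ 2 := contDiff_norm_sq ℝ
  have hnorm' : ContDiff ℝ 2 (ε • fun w : Ck k => ‖w‖ ^ 2) := hnorm.const_smul ε
  have hsplit : (fun w => u w + ε * ‖w‖ ^ 2) = u + ε • fun w : Ck k => ‖w‖ ^ 2 := rfl
  have hsecond (η : Ck k) : iteratedFDeriv ℝ 2 (fun w => u w + ε * ‖w‖ ^ 2) z ![η, η] =
      iteratedFDeriv ℝ 2 u z ![η, η] + ε * (2 * ‖η‖ ^ 2) := by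
    rw [hsplit, iteratedFDeriv_add_apply hu.contDiffAt hnorm'.contDiffAt,
      iteratedFDeriv_const_smul_apply hnorm.contDiffAt]
    simp [iteratedFDeriv_two_norm_sq_apply]
  rw [Levi, Levi, hsecond, hsecond, norm_smul, Complex.norm_I, one_mul]
  ring

theorem exists_ne_zero_forall_apply_eq_zero {K V : Type*} [Field K] [AddCommGroup V]
    [Module K V] [FiniteDimensional K V] {m : ℕ} (hm : m < Module.finrank K V)
    (f : Fin m → V →ₗ[K] K) : ∃ ξ : V, ξ ≠ 0 ∧ ∀ j, f j ξ = 0 := by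
  have hker : LinearMap.ker (LinearMap.pi f) ≠ ⊥ :=
    LinearMap.ker_ne_bot_of_finrank_lt (by simpa using hm)
  obtain ⟨ξ, hξ, hne⟩ := Submodule.exists_mem_ne_zero_of_ne_bot hker
  exact ⟨ξ, hne, fun j => congrFun hξ j⟩

theorem le_sSup_image_frontier_of_forall_not_isLocalMax {E : Type*} [NormedAddCommGroup E]
    [ProperSpace E] {u : E → ℝ} (hu : Continuous u) {U : Set E} (hU : Bornology.IsBounded U)
    (h : ∀ ε > 0, ∀ z ∈ interior U, ¬IsLocalMax (fun w => u w + ε * ‖w‖ ^ 2) z)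
    {x : E} (hx : x ∈ closure U) : u x ≤ sSup (u '' frontier U) := by
  by_contra! hlt
  set B := sSup (u '' frontier U)
  have hK : IsCompact (closure U) := hU.isCompact_closure
  have hB (ζ : E) (hζ : ζ ∈ frontier U) : u ζ ≤ B :=
    le_csSup ((hK.of_isClosed_subset isClosed_frontier frontier_subset_closure).image hu).bddAbove
      (mem_image_of_mem u hζ)
  obtain ⟨R, hR⟩ := hU.closure.subset_closedBall 0
  have hnorm (w : E) (hw : w ∈ closure U) : ‖w‖ ^ 2 ≤ R ^ 2 := by
    have := mem_closedBall_zero_iff.mp (hR hw)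
    gcongr
  set ε := (u x - B) / (R ^ 2 + 1)
  have hε : 0 < ε := div_pos (by linarith) (by positivity)
  have hεR : ε * R ^ 2 < u x - B := by
    have : ε * (R ^ 2 + 1) = u x - B := div_mul_cancel₀ _ (by positivity)
    nlinarith
  set v := fun w => u w + ε * ‖w‖ ^ 2
  obtain ⟨z, hz, hzmax⟩ := hK.exists_isMaxOn ⟨x, hx⟩ (by fun_prop : Continuous v).continuousOn
  have hz_frontier : z ∉ frontier U := fun hzU => by
    have h₁ : v z ≤ B + ε * R ^ 2 :=
      add_le_add (hB z hzU) (mul_le_mul_of_nonneg_left (hnorm z hz) hε.le)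
    have h₂ : u x ≤ v z := (le_add_of_nonneg_right (by positivity)).trans (hzmax hx)
    linarith
  have hz_int : z ∈ interior U := closure_sdiff_frontier U ▸ ⟨hz, hz_frontier⟩
  exact h ε hε z hz_int <| hzmax.isLocalMax <|
    mem_of_superset (isOpen_interior.mem_nhds hz_int) (interior_subset.trans subset_closure)

theorem pfaff_max_principle_general {k m : ℕ} (hk : 2 ≤ k)
    (hmk : m ≤ k - 1)
    (α : Fin m → (Ck k → (Ck k →L[ℂ] ℂ)))
    (u : Ck k → ℝ) (hu : ContDiff ℝ 2 u)
    (hLevi : ∀ z ξ : Ck k, (∀ j : Fin m, α j z ξ = 0) → 0 ≤ Levi u z ξ) :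
    ∀ U : Set (Ck k), IsOpen U → U.Nonempty → Bornology.IsBounded U →
      ∀ x ∈ closure U, u x ≤ sSup (u '' frontier U) := by
  intro U _ _ hU x hx
  refine le_sSup_image_frontier_of_forall_not_isLocalMax hu.continuous hU ?_ hx
  intro ε hε z _ hmax
  obtain ⟨ξ, hξ, hker⟩ := exists_ne_zero_forall_apply_eq_zero
    (by rw [finrank_euclideanSpace_fin]; omega) fun j => (α j z : Ck k →ₗ[ℂ] ℂ)
  have hv : ContDiff ℝ 2 fun w : Ck k => u w + ε * ‖w‖ ^ 2 :=
    hu.add (contDiff_const.mul (contDiff_norm_sq ℂ))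
  have hneg := Levi_nonpos_of_isLocalMax hmax hv ξ
  rw [Levi_add_mul_norm_sq hu] at hneg
  have hnonneg := hLevi z ξ hker
  have hpos : 0 < ε * ‖ξ‖ ^ 2 := by positivity
  linarith

/-- (The Pfaff-system case of Theorem 3.8, as in Remark 3.9.)  Let
`α₁, …, α_m` be continuous `(1,0)`-forms on `ℂᵏ` with `m ≤ k−1`, and let
`Γ_z = ⋂ⱼ ker αⱼ(z)`.  If `u` is `C²` with nonnegative Levi form in the
directions of `Γ`, then `u` satisfies the maximum principle on every nonempty
bounded open set: `u(x) ≤ sup_{∂U} u` for all `x ∈ closure U`. -/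
theorem pfaff_max_principle {k m : ℕ} (hk : 2 ≤ k) (hm : 1 ≤ m)
    (hmk : m ≤ k - 1)
    (α : Fin m → (Ck k → (Ck k →L[ℂ] ℂ)))
    (hα : ∀ j : Fin m, Continuous (α j))
    (u : Ck k → ℝ) (hu : ContDiff ℝ 2 u)
    (hLevi : ∀ z ξ : Ck k, (∀ j : Fin m, α j z ξ = 0) → 0 ≤ Levi u z ξ) :
    ∀ U : Set (Ck k), IsOpen U → U.Nonempty → Bornology.IsBounded U →
      ∀ x ∈ closure U, u x ≤ sSup (u '' frontier U) :=
  pfaff_max_principle_general hk hmk α u hu hLevi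
end
end
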